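/- arXiv:2410.08654 — 2 statements merged into one kernel-verified Lean document; each statement's English description precedes it below -/
import Mathlib

section
/- For the data sequence (a, -a, a, -a, b+ε+x, b+ε, b-ε, b-ε-x) with a = 1, b = 10, ε = 2, x = √(8/3), under the square loss, the best first split (the one minimizing total squared error over the two resulting segments, each fit by its mean) is after position 4. -/
/-- Mean of a list of real numbers. -/
noncomputable def listMean (l : List ℝ) : ℝ := l.sum / l.length

/-- Square loss of a segment: `min_μ ∑ (x_i - μ)² = ∑ (x_i - x̄)²`. -/
noncomputable def sqloss (l : List ℝ) : ℝ :=
  (l.map (fun x => (x - listMean l) ^ 2)).sum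

/-- Total square loss after splitting the list `l` after position `c`. -/
noncomputable def sqSplitLoss (l : List ℝ) (c : ℕ) : ℝ :=
  sqloss (l.take c) + sqloss (l.drop c)

/-- Loss decrease obtained by splitting the segment `l` after position `c`. -/
noncomputable def sqDec (l : List ℝ) (c : ℕ) : ℝ :=
  sqloss l - sqSplitLoss l c

/-- for the data `(a,-a,a,-a,b+ε+x,b+ε,b-ε,b-ε-x)` with
`a = 1`, `b = 10`, `ε = 2`, `x = √(8/3)`, under the square loss, the best
first split (minimizing the total square loss of the two resulting
segments) is after position `4`. -/
theorem best_first_split_at_four :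
    let a : ℝ := 1; let b : ℝ := 10; let e : ℝ := 2
    let x : ℝ := Real.sqrt (8 / 3)
    let l : List ℝ := [a, -a, a, -a, b + e + x, b + e, b - e, b - e - x]
    ∀ c ∈ Finset.Icc 1 7, c ≠ 4 → sqSplitLoss l 4 < sqSplitLoss l c := by
  intro a b e x l c hc hne
  have hx2 : x ^ 2 = 8 / 3 := Real.sq_sqrt (by norm_num)
  have hx0 : 0 ≤ x := Real.sqrt_nonneg _
  obtain ⟨h1, h2⟩ := Finset.mem_Icc.mp hc
  interval_cases c
  all_goals first | (exact absurd rfl hne) |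
    (simp only [l, a, b, e, sqSplitLoss, sqloss, listMean, List.take, List.drop,
      List.map, List.sum_cons, List.sum_nil, List.length]
     push_cast
     nlinarith [hx2, hx0, sq_nonneg x])
end

section
/- For the 8-point data sequence (1, -1, 1, -1, 10+2+√(8/3), 12, 8, 8-√(8/3)) under the square loss: after splitting after position 4 and then after position 6, the three remaining segments — (1,-1,1,-1), (12+√(8/3), 12), and (8, 8-√(8/3)) — each have best split loss decrease exactly equal to 4/3. -/
/-- for the 8-point sequence
`(1,-1,1,-1,12+√(8/3),12,8,8-√(8/3))` under the square loss, after the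
splits at positions 4 and 6 the three remaining segments
`(1,-1,1,-1)`, `(12+√(8/3),12)`, `(8,8-√(8/3))` all have best split loss
decrease exactly `4/3`. -/
theorem three_way_tie_four_thirds :
    let x : ℝ := Real.sqrt (8 / 3)
    let s1 : List ℝ := [1, -1, 1, -1]
    let s2 : List ℝ := [12 + x, 12]
    let s3 : List ℝ := [8, 8 - x]
    (∀ c ∈ Finset.Icc 1 3, sqDec s1 c ≤ 4 / 3) ∧
    (∃ c ∈ Finset.Icc 1 3, sqDec s1 c = 4 / 3) ∧
    sqDec s2 1 = 4 / 3 ∧ sqDec s3 1 = 4 / 3 := by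
  intro x s1 s2 s3
  have hx : x ^ 2 = 8 / 3 := Real.sq_sqrt (by norm_num)
  simp only [s1, s2, s3] at *
  refine ⟨?_, ⟨1, by decide, ?_⟩, ?_, ?_⟩
  · intro c hc
    fin_cases hc <;>
      · simp [sqDec, sqSplitLoss, sqloss, listMean]; norm_num
  · simp [sqDec, sqSplitLoss, sqloss, listMean]; norm_num
  · simp [sqDec, sqSplitLoss, sqloss, listMean]; nlinarith [hx]
  · simp [sqDec, sqSplitLoss, sqloss, listMean]; nlinarith [hx]
end
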